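/- Let N be a complete Riemannian manifold, p ∈ N, and R > 0. If g ∈ π₁(B_p(R), p) satisfies d(p̃, g p̃) < 2R, where d is the distance in the universal cover B̃_p(R) of B_p(R) equipped with the lifted Riemannian metric and p̃ is a fixed lift of p, then there exists a minimizing geodesic in B̃_p(R) from p̃ to g p̃, i.e., a geodesic segment whose length equals d(p̃, g p̃). -/

import Mathlib

open Metric unitInterval CategoryTheory
open scoped FundamentalGroupoid ENNReal Manifold

universe u

noncomputable section

/-- The length of a path in a pseudo-emetric space, as the total variation of the
parametrization. -/
def pathLength {X : Type u} [PseudoEMetricSpace X] {x y : X} (γ : Path x y) : ℝ≥0∞ :=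
  eVariationOn γ Set.univ

/-- A (pseudo-e)metric space is a *length space* if the distance between any two points is
the infimum of the lengths of paths joining them. -/
def IsLengthSpace (X : Type u) [PseudoEMetricSpace X] : Prop :=
  ∀ x y : X, edist x y = ⨅ γ : Path x y, pathLength γ

/-- Two loops are homotopic (rel endpoints) *within* the set `S` if there is a path homotopy
between them whose image is contained in `S`. -/
def HomotopicIn {X : Type u} [TopologicalSpace X] {x y : X} (γ₁ γ₂ : Path x y) (S : Set X) :
    Prop :=
  ∃ H : Path.Homotopy γ₁ γ₂, ∀ z : I × I, H z ∈ S

/-- A loop is nullhomotopic within the set `S`. -/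
def NullHomotopicIn {X : Type u} [TopologicalSpace X] {x : X} (γ : Path x x) (S : Set X) :
    Prop :=
  HomotopicIn γ (Path.refl x) S

/-- The homomorphism on fundamental groups induced by a continuous map. -/
def indHom {X Y : Type u} [TopologicalSpace X] [TopologicalSpace Y]
    (f : C(X, Y)) (x : X) : FundamentalGroup X x →* FundamentalGroup Y (f x) :=
  Functor.mapEnd (FundamentalGroupoid.mk x)
    (πₘ (show TopCat.of X ⟶ TopCat.of Y from TopCat.ofHom f))

/-- The class of a loop in the fundamental group. -/
def pathClass {X : Type u} [TopologicalSpace X] {x : X} (γ : Path x x) :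
    FundamentalGroup X x :=
  @FundamentalGroup.fromPath X _ x ⟦γ⟧

/-- The basepoint `p` as a point of the closed ball `B̄_p(r)`. -/
def pcb {X : Type u} [MetricSpace X] (p : X) {r : ℝ} (h0 : 0 ≤ r) : closedBall p r :=
  ⟨p, mem_closedBall_self h0⟩

/-- The basepoint `p` as a point of the open ball `B_p(R)`. -/
def ctr {X : Type u} [MetricSpace X] (p : X) {R : ℝ} (hR : 0 < R) : ball p R :=
  ⟨p, mem_ball_self hR⟩

/-- The inclusion of the closed ball `B̄_p(r)` into the open ball `B_p(R)`, `r < R`. -/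
def cbInclusion {X : Type u} [MetricSpace X] (p : X) {r R : ℝ} (h : r < R) :
    C(closedBall p r, ball p R) :=
  ⟨fun z => ⟨z.1, mem_ball.mpr (lt_of_le_of_lt (mem_closedBall.mp z.2) h)⟩,
    Continuous.subtype_mk continuous_subtype_val _⟩

/-- The geometric semi-local fundamental group `G(p,r,R)`: the image of
`π₁(B̄_p(r), p) → π₁(B_p(R), p)`, as a subgroup of `π₁(B_p(R), p)`. -/
def G {X : Type u} [MetricSpace X] (p : X) {r R : ℝ} (h0 : 0 ≤ r) (hrR : r < R) :
    Subgroup (FundamentalGroup (ball p R) (ctr p (h0.trans_lt hrR))) :=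
  (indHom (cbInclusion p hrR) (pcb p h0)).range

/-- The homomorphism `π₁(B_p(R), p) → π₁(X, p)` induced by inclusion. -/
def toAmb {X : Type u} [MetricSpace X] (p : X) {R : ℝ} (hR : 0 < R) :
    FundamentalGroup (ball p R) (ctr p hR) →* FundamentalGroup X p :=
  indHom ⟨Subtype.val, continuous_subtype_val⟩ (ctr p hR)

/-- The homomorphism `π₁(B̄_p(r), p) → π₁(X, p)` induced by inclusion. -/
def cbToAmb {X : Type u} [MetricSpace X] (p : X) {r : ℝ} (h0 : 0 ≤ r) :
    FundamentalGroup (closedBall p r) (pcb p h0) →* FundamentalGroup X p :=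
  indHom ⟨Subtype.val, continuous_subtype_val⟩ (pcb p h0)

end

/-!
Approximate `d = d(p̃, g p̃)` by paths from `p̃` to `g p̃` that are `(d + 1/(m+1))`-Lipschitz
(arc-length reparametrizations of almost minimizing paths). A local isometry out of a length
space is `1`-Lipschitz, so their projections are loops at `p` with the same Lipschitz constants.
They live in `N`, a complete locally compact length space, hence proper (Hopf–Rinow), so by
Arzelà–Ascoli a subsequence converges uniformly to a `d`-Lipschitz loop `c`. Such a loop stays
within `d / 2 < R` of `p`, so `c` is a loop in `B_p(R)` and lifts to a path starting at `p̃`.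
Since the covering map is a local isometry, lifts of uniformly close paths with a common
starting point are uniformly close: the lift of `c` ends at `g p̃` and is `d`-Lipschitz, i.e.
it is a minimizing geodesic.
-/

open Set Filter Topology NNReal
open scoped BoundedContinuousFunction

namespace unitInterval

theorem dist_eq_sub_of_le {a b : I} (h : a ≤ b) : dist a b = b - a := by
  rw [Subtype.dist_eq, Real.dist_eq, abs_sub_comm, abs_of_nonneg (sub_nonneg.2 (by exact h))]

theorem edist_le_of_forall_dist_lt {X : Type*} [PseudoEMetricSpace X] {F : I → X}
    {Φ : I → I → ℝ≥0∞} (hΦ : ∀ a b c : I, a ≤ b → b ≤ c → Φ a b + Φ b c ≤ Φ a c) {δ : ℝ}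
    (hδ : 0 < δ) (hloc : ∀ a b : I, a ≤ b → dist a b < δ → edist (F a) (F b) ≤ Φ a b)
    {a b : I} (hab : a ≤ b) : edist (F a) (F b) ≤ Φ a b := by
  suffices ∀ n : ℕ, ∀ a b : I, a ≤ b → (b : ℝ) - a < n * (δ / 2) →
      edist (F a) (F b) ≤ Φ a b by
    obtain ⟨n, hn⟩ := exists_nat_gt (((b : ℝ) - a) / (δ / 2))
    exact this n a b hab ((div_lt_iff₀ (half_pos hδ)).1 hn)
  intro n
  induction n with
  | zero =>
    intro a b hab h
    simp only [CharP.cast_eq_zero, zero_mul, sub_neg] at h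
    exact absurd hab (not_le.2 h)
  | succ n ih =>
    intro a b hab h
    by_cases hsmall : (b : ℝ) - a < δ
    · exact hloc a b hab (by rwa [dist_eq_sub_of_le hab])
    have hb : (a : ℝ) + δ / 2 ≤ b := by linarith
    set c : I := ⟨a + δ / 2, by linarith [a.2.1], hb.trans b.2.2⟩
    have hac : a ≤ c := show (a : ℝ) ≤ a + δ / 2 by linarith
    calc edist (F a) (F b) ≤ edist (F a) (F c) + edist (F c) (F b) := edist_triangle _ _ _
      _ ≤ Φ a c + Φ c b := add_le_add (hloc a c hac (by
          rw [dist_eq_sub_of_le hac]; show (a : ℝ) + δ / 2 - a < δ; linarith))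
          (ih c b hb (by push_cast at h; simp only [c]; linarith))
      _ ≤ Φ a b := hΦ a c b hac hb

end unitInterval

section Curves

variable {X : Type*} [MetricSpace X]

theorem Path.dist_eq_of_lipschitzWith {x y : X} {γ : Path x y}
    (hγ : LipschitzWith (nndist x y) γ) (s t : I) :
    dist (γ s) (γ t) = |(s : ℝ) - t| * dist x y := by
  wlog hst : s ≤ t generalizing s t
  · rw [dist_comm, abs_sub_comm]; exact this t s (le_of_not_ge hst)
  have hlip : ∀ a b : I, a ≤ b → dist (γ a) (γ b) ≤ dist x y * ((b : ℝ) - a) :=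
    fun a b hab => by simpa [unitInterval.dist_eq_sub_of_le hab] using hγ.dist_le_mul a b
  rw [abs_sub_comm, abs_of_nonneg (sub_nonneg.2 (show (s : ℝ) ≤ t from hst)), mul_comm]
  refine le_antisymm (hlip s t hst) ?_
  have h0s := hlip 0 s s.2.1
  have ht1 := hlip t 1 t.2.2
  simp only [Icc.coe_zero, Icc.coe_one, sub_zero, γ.source, γ.target] at h0s ht1
  nlinarith [dist_triangle4 x (γ s) (γ t) y]

theorem LipschitzWith.dist_le_half_of_loop {γ : I → X} {L : ℝ≥0} (hγ : LipschitzWith L γ)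
    {x : X} (h0 : γ 0 = x) (h1 : γ 1 = x) (t : I) : dist (γ t) x ≤ L / 2 := by
  have h₀ := hγ.dist_le_mul t 0
  have h₁ := hγ.dist_le_mul t 1
  rw [h0, Subtype.dist_eq, Icc.coe_zero, dist_zero_right, Real.norm_eq_abs,
    abs_of_nonneg t.2.1] at h₀
  rw [h1, Subtype.dist_eq, Icc.coe_one, Real.dist_eq, abs_sub_comm,
    abs_of_nonneg (sub_nonneg.2 t.2.2)] at h₁
  linarith

theorem continuous_variationOnFromTo_of_continuous {α : Type*} [LinearOrder α]
    [TopologicalSpace α] [OrderTopology α] {f : α → X} (hf : Continuous f)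
    (hbv : LocallyBoundedVariationOn f univ) (a : α) :
    Continuous (variationOnFromTo f univ a) := by
  refine continuous_iff_continuousAt.2 fun b =>
    continuousAt_iff_continuous_left'_right'.2 ⟨?_, ?_⟩
  · have := variationOnFromTo.tendsto_left (mem_univ a) (mem_univ b) hbv
      (l := f b) (by simpa using hf.continuousAt.tendsto.mono_left nhdsWithin_le_nhds)
    simpa [ContinuousWithinAt] using this
  · have := variationOnFromTo.tendsto_right (mem_univ a) (mem_univ b) hbv
      (l := f b) (by simpa using hf.continuousAt.tendsto.mono_left nhdsWithin_le_nhds)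
    simpa [ContinuousWithinAt] using this

theorem HasUnitSpeedOn.dist_le {f : ℝ → X} {s : Set ℝ} (hf : HasUnitSpeedOn f s) {a b : ℝ}
    (ha : a ∈ s) (hb : b ∈ s) : dist (f a) (f b) ≤ |a - b| := by
  wlog hab : a ≤ b generalizing a b
  · rw [dist_comm, abs_sub_comm]; exact this hb ha (le_of_not_ge hab)
  have := (eVariationOn.edist_le f (show a ∈ s ∩ Icc a b from ⟨ha, le_rfl, hab⟩)
    (show b ∈ s ∩ Icc a b from ⟨hb, hab, le_rfl⟩)).trans_eq (hf ha hb)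
  rwa [NNReal.coe_one, one_mul, edist_dist, ENNReal.ofReal_le_ofReal_iff (by linarith),
    ← abs_of_nonneg (sub_nonneg.2 hab), abs_sub_comm] at this

theorem Path.exists_lipschitzWith_of_pathLength_le {x y : X} (γ : Path x y) {L : ℝ≥0}
    (hγ : pathLength γ ≤ L) : ∃ γ' : Path x y, LipschitzWith L γ' := by
  have hbv : LocallyBoundedVariationOn γ univ :=
    BoundedVariationOn.locallyBoundedVariationOn (ne_top_of_le_ne_top ENNReal.coe_ne_top hγ)
  set V := variationOnFromTo γ univ 0
  set φ := naturalParameterization γ univ 0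
  have hV0 : V 0 = 0 := variationOnFromTo.self _ _ _
  have hV1 : V 1 ≤ L := by
    have h01 : Icc (0 : I) 1 = univ := Icc_bot_top
    rw [show V 1 = (pathLength γ).toReal by
      simp only [V, variationOnFromTo.eq_of_le _ _ zero_le_one, univ_inter, h01, pathLength]]
    exact ENNReal.toReal_le_of_le_ofReal L.2 (by simpa using hγ)
  have hφ : ∀ a b : ℝ, a ∈ Icc 0 (V 1) → b ∈ Icc 0 (V 1) → dist (φ a) (φ b) ≤ |a - b| := by
    have hsub : Icc 0 (V 1) ⊆ V '' univ := by
      rw [← hV0, image_univ]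
      exact intermediate_value_univ 0 1
        (continuous_variationOnFromTo_of_continuous γ.continuous hbv 0)
    exact fun a b ha hb =>
      (has_unit_speed_naturalParameterization γ hbv (mem_univ 0)).dist_le (hsub ha) (hsub hb)
  have hφV : ∀ t, φ (V t) = γ t := fun t =>
    edist_eq_zero.1 (edist_naturalParameterization_eq_zero hbv (mem_univ 0) (mem_univ t))
  have hV1₀ : 0 ≤ V 1 := hV0 ▸ variationOnFromTo.monotoneOn hbv (mem_univ 0) (mem_univ 0)
    (mem_univ 1) zero_le_one
  have hmem : ∀ t : I, V 1 * t ∈ Icc 0 (V 1) := fun t =>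
    ⟨mul_nonneg hV1₀ t.2.1, mul_le_of_le_one_right hV1₀ t.2.2⟩
  have hlip : LipschitzWith L fun t : I => φ (V 1 * t) := by
    refine LipschitzWith.of_dist_le_mul fun s t => (hφ _ _ (hmem s) (hmem t)).trans ?_
    rw [← mul_sub, abs_mul, abs_of_nonneg hV1₀, Subtype.dist_eq, Real.dist_eq]
    exact mul_le_mul_of_nonneg_right hV1 (abs_nonneg _)
  refine ⟨⟨⟨_, hlip.continuous⟩, ?_, ?_⟩, hlip⟩
  · simpa [hV0] using hφV 0
  · simpa using hφV 1

end Curves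

section LengthSpace

variable {X : Type*} [MetricSpace X]

theorem IsLengthSpace.exists_path_lipschitzWith (hX : IsLengthSpace X) {x y : X} {L : ℝ≥0}
    (h : dist x y < L) : ∃ γ : Path x y, LipschitzWith L γ := by
  have : ⨅ γ : Path x y, pathLength γ < L := by
    rw [← hX, edist_lt_coe, ← NNReal.coe_lt_coe, coe_nndist]; exact h
  obtain ⟨γ, hγ⟩ := iInf_lt_iff.1 this
  exact γ.exists_lipschitzWith_of_pathLength_le hγ.le

theorem IsLengthSpace.exists_seq_path_lipschitzWith (hX : IsLengthSpace X) (x y : X) :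
    ∃ γ : ℕ → Path x y, ∀ m : ℕ, LipschitzWith (nndist x y + 1 / (m + 1)) (γ m) := by
  choose γ hγ using fun m : ℕ => hX.exists_path_lipschitzWith (L := nndist x y + 1 / (m + 1))
    (by rw [NNReal.coe_add, coe_nndist]; exact lt_add_of_pos_right _ (by positivity))
  exact ⟨γ, hγ⟩

theorem IsLengthSpace.closedBall_subset_thickening (hX : IsLengthSpace X) (x : X) {r s ε : ℝ}
    (hr : 0 ≤ r) (hs : 0 ≤ s) (hε : 0 < ε) :
    closedBall x (r + s) ⊆ thickening (s + ε) (closedBall x r) := by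
  intro z hz
  rw [mem_closedBall, dist_comm] at hz
  rw [mem_thickening_iff]
  by_cases hzr : dist x z ≤ r
  · exact ⟨z, by rwa [mem_closedBall, dist_comm], by rw [dist_self]; linarith⟩
  push Not at hzr
  set L : ℝ≥0 := ⟨dist x z + ε / 2, by positivity⟩
  have hL : dist x z < L := show dist x z < dist x z + ε / 2 by linarith
  have hL₀ : (0 : ℝ) < L := by linarith
  obtain ⟨γ, hγ⟩ := hX.exists_path_lipschitzWith hL
  set t : I := ⟨r / L, by positivity, (div_le_one hL₀).2 (by linarith)⟩
  refine ⟨γ t, ?_, ?_⟩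
  · have := hγ.dist_le_mul 0 t
    rw [γ.source, Subtype.dist_eq, Icc.coe_zero, dist_zero_left, Real.norm_eq_abs,
      abs_of_nonneg (by positivity), mul_div_cancel₀ _ hL₀.ne'] at this
    rwa [mem_closedBall, dist_comm]
  · have := hγ.dist_le_mul t 1
    rw [γ.target, Subtype.dist_eq, Icc.coe_one, Real.dist_eq, abs_sub_comm,
      abs_of_nonneg (sub_nonneg.2 t.2.2), mul_sub, mul_one, mul_div_cancel₀ _ hL₀.ne'] at this
    rw [dist_comm]
    exact this.trans_lt (show dist x z + ε / 2 - r < s + ε by linarith)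

theorem totallyBounded_of_forall_subset_thickening {s : Set X}
    (h : ∀ ε > 0, ∃ K, IsCompact K ∧ s ⊆ thickening ε K) : TotallyBounded s := by
  refine Metric.totallyBounded_iff.2 fun ε hε => ?_
  obtain ⟨K, hK, hsK⟩ := h (ε / 2) (half_pos hε)
  obtain ⟨t, -, ht, hKt⟩ := finite_cover_balls_of_compact hK (half_pos hε)
  refine ⟨t, ht, fun z hz => ?_⟩
  obtain ⟨w, hw, hzw⟩ := mem_thickening_iff.1 (hsK hz)
  obtain ⟨y, hy, hwy⟩ := mem_iUnion₂.1 (hKt hw)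
  exact mem_iUnion₂.2 ⟨y, hy, by
    rw [mem_ball] at hwy ⊢; linarith [dist_triangle z w y]⟩

theorem IsLengthSpace.exists_isCompact_closedBall_add [LocallyCompactSpace X]
    (hX : IsLengthSpace X) (x : X) {r : ℝ} (hr : 0 ≤ r) (hc : IsCompact (closedBall x r)) :
    ∃ δ > 0, IsCompact (closedBall x (r + δ)) := by
  obtain ⟨δ, hδ, hδc⟩ := hc.exists_isCompact_cthickening
  refine ⟨δ / 2, half_pos hδ, hδc.of_isClosed_subset isClosed_closedBall ?_⟩
  refine (hX.closedBall_subset_thickening x hr (half_pos hδ).le (half_pos hδ)).trans ?_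
  rw [add_halves]
  exact thickening_subset_cthickening _ _

theorem IsLengthSpace.isCompact_closedBall_of_forall_lt [CompleteSpace X]
    (hX : IsLengthSpace X) (x : X) {r : ℝ} (hr : 0 < r)
    (h : ∀ r' < r, IsCompact (closedBall x r')) :
    IsCompact (closedBall x r) := by
  refine isCompact_iff_totallyBounded_isComplete.2
    ⟨totallyBounded_of_forall_subset_thickening fun ε hε => ?_, isClosed_closedBall.isComplete⟩
  set s := min r (ε / 2)
  have hs : 0 < s := lt_min hr (half_pos hε)
  refine ⟨_, h (r - s) (by linarith), ?_⟩
  have := hX.closedBall_subset_thickening x (sub_nonneg.2 (min_le_left r (ε / 2))) hs.le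
    (half_pos hε)
  rw [sub_add_cancel] at this
  exact this.trans (thickening_mono (by linarith [min_le_right r (ε / 2)]) _)

theorem IsLengthSpace.properSpace [LocallyCompactSpace X] [CompleteSpace X]
    (hX : IsLengthSpace X) : ProperSpace X := by
  refine ⟨fun x r => ?_⟩
  by_contra hr
  set B := {r | ¬ IsCompact (closedBall x r)}
  have hB : ∀ r ∈ B, 0 ≤ r := fun r hr => by
    by_contra hneg
    exact hr (by rw [closedBall_eq_empty.2 (by linarith)]; exact isCompact_empty)
  have hBbdd : BddBelow B := ⟨0, hB⟩
  set ρ := sInf B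
  have hρ : 0 ≤ ρ := le_csInf ⟨r, hr⟩ hB
  have hlt : ∀ r' < ρ, IsCompact (closedBall x r') := fun r' h' => by
    by_contra hc; exact (csInf_le hBbdd hc).not_gt h'
  have hρc : IsCompact (closedBall x ρ) := by
    rcases hρ.eq_or_lt with h0 | h0
    · rw [← h0, closedBall_zero]; exact isCompact_singleton
    · exact hX.isCompact_closedBall_of_forall_lt x h0 hlt
  obtain ⟨δ, hδ, hδc⟩ := hX.exists_isCompact_closedBall_add x hρ hρc
  have : ρ + δ ≤ ρ := le_csInf ⟨r, hr⟩ fun r' hr' => by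
    by_contra hlt'
    exact hr' (hδc.of_isClosed_subset isClosed_closedBall
      (closedBall_subset_closedBall (not_le.1 hlt').le))
  linarith

end LengthSpace

theorem exists_subseq_tendstoUniformly_of_lipschitzWith {α Y : Type*} [MetricSpace α]
    [CompactSpace α] [MetricSpace Y] {K : Set Y} (hK : IsCompact K) {γ : ℕ → α → Y}
    (hγK : ∀ m t, γ m t ∈ K) {L : ℕ → ℝ≥0} {d : ℝ≥0} (hL : Tendsto L atTop (𝓝 d))
    (hγ : ∀ m, LipschitzWith (L m) (γ m)) :
    ∃ c : C(α, Y), LipschitzWith d c ∧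
      ∃ φ : ℕ → ℕ, StrictMono φ ∧ TendstoUniformly (fun k => γ (φ k)) c atTop := by
  obtain ⟨C, hC⟩ := hL.bddAbove_range
  set F : ℕ → α →ᵇ Y := fun m => .mkOfCompact ⟨γ m, (hγ m).continuous⟩
  have hAA := BoundedContinuousFunction.arzela_ascoli K hK (range F)
    (by rintro _ t ⟨m, rfl⟩; exact hγK m t)
    (LipschitzWith.uniformEquicontinuous (fun F : range F => ⇑F.1) C
      (by rintro ⟨_, m, rfl⟩; exact (hγ m).weaken (hC (mem_range_self m)))).equicontinuous
  obtain ⟨c, -, φ, hφ, hc⟩ := hAA.tendsto_subseq fun m => subset_closure (mem_range_self m)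
  have hconv : TendstoUniformly (fun k => γ (φ k)) c atTop :=
    BoundedContinuousFunction.tendsto_iff_tendstoUniformly.1 hc
  refine ⟨c.toContinuousMap, LipschitzWith.of_dist_le_mul fun s t => ?_, φ, hφ, hconv⟩
  exact le_of_tendsto_of_tendsto' ((hconv.tendsto_at s).dist (hconv.tendsto_at t))
    ((NNReal.tendsto_coe.2 (hL.comp hφ.tendsto_atTop)).mul_const _)
    fun k => (hγ (φ k)).dist_le_mul s t

theorem exists_loop_lipschitzWith_tendstoUniformly {Y : Type*} [MetricSpace Y]
    [ProperSpace Y] {y : Y} {γ : ℕ → I → Y} (h0 : ∀ m, γ m 0 = y) (h1 : ∀ m, γ m 1 = y) {d : ℝ≥0}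
    (hγ : ∀ m : ℕ, LipschitzWith (d + 1 / (m + 1)) (γ m)) :
    ∃ c : C(I, Y), LipschitzWith d c ∧ (∀ t, dist (c t) y ≤ d / 2) ∧
      ∃ φ : ℕ → ℕ, TendstoUniformly (fun k => γ (φ k)) c atTop := by
  have hL : Tendsto (fun m : ℕ => d + 1 / (m + 1)) atTop (𝓝 d) := by
    simpa using (tendsto_const_nhds (x := d)).add
      (tendsto_one_div_add_atTop_nhds_zero_nat (𝕜 := ℝ≥0))
  have hγK : ∀ m t, γ m t ∈ closedBall y (d + 1) := fun m t => by
    refine mem_closedBall.2 (((hγ m).dist_le_half_of_loop (h0 m) (h1 m) t).trans ?_)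
    have : (1 : ℝ) / (m + 1) ≤ 1 := div_le_one_of_le₀ (by linarith [m.cast_nonneg (α := ℝ)])
      (by positivity)
    push_cast
    linarith [d.2]
  obtain ⟨c, hc, φ, -, hlim⟩ :=
    exists_subseq_tendstoUniformly_of_lipschitzWith (isCompact_closedBall y _) hγK hL hγ
  have hc0 : c 0 = y := tendsto_nhds_unique (hlim.tendsto_at 0) (by simp [h0])
  have hc1 : c 1 = y := tendsto_nhds_unique (hlim.tendsto_at 1) (by simp [h1])
  exact ⟨c, hc, LipschitzWith.dist_le_half_of_loop hc hc0 hc1, φ, hlim⟩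

theorem IsCoveringMap.apply_eq_of_lift {E X : Type*} [TopologicalSpace E]
    [TopologicalSpace X] {q : E → X} (hq : IsCoveringMap q) {x : X} {e e' : E} (he : q e = x)
    {γ : Path x x} (h : ∀ Γ : C(I, E), (∀ t, q (Γ t) = γ t) → Γ 0 = e → Γ 1 = e') :
    q e' = x := by
  have hγ0 : γ.toContinuousMap 0 = q e := by simp [he]
  rw [← h _ (congrFun (hq.liftPath_lifts _ e hγ0)) (hq.liftPath_zero _ e hγ0)]
  exact (congrFun (hq.liftPath_lifts _ e hγ0) 1).trans γ.target

section LocalIsometry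

variable {E F : Type*} [MetricSpace E] [MetricSpace F]

def IsLocalIsometry (f : E → F) : Prop :=
  ∀ e : E, ∃ ε > 0, ∀ x y : E, dist x e < ε → dist y e < ε → dist (f x) (f y) = dist x y

namespace IsLocalIsometry

variable {f : E → F}

theorem exists_uniform_radius (hf : IsLocalIsometry f) {K : Set E} (hK : IsCompact K) :
    ∃ ε > 0, ∀ e ∈ K, ∀ x y : E, dist x e < ε → dist y e < ε →
      dist (f x) (f y) = dist x y := by
  choose ε hε hfε using hf
  obtain ⟨δ, hδ, hKδ⟩ := lebesgue_number_lemma_of_metric hK (fun e => isOpen_ball)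
    fun e _ => mem_iUnion.2 ⟨e, mem_ball_self (hε e)⟩
  refine ⟨δ, hδ, fun e he x y hx hy => ?_⟩
  obtain ⟨c, hc⟩ := hKδ e he
  exact hfε c x y (hc hx) (hc hy)

theorem exists_dist_eq_of_dist_lt (hf : IsLocalIsometry f) (γ : C(I, E)) :
    ∃ δ > 0, ∀ a b : I, dist a b < δ → dist (f (γ a)) (f (γ b)) = dist (γ a) (γ b) := by
  obtain ⟨ε, hε, hfε⟩ := hf.exists_uniform_radius (isCompact_range γ.continuous)
  obtain ⟨δ, hδ, hγδ⟩ := Metric.uniformContinuous_iff.1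
    (CompactSpace.uniformContinuous_of_continuous γ.continuous) ε hε
  exact ⟨δ, hδ, fun a b hab => hfε (γ a) (mem_range_self a) _ _ (by rwa [dist_self])
    (by rw [dist_comm]; exact hγδ hab)⟩

theorem edist_le_pathLength (hf : IsLocalIsometry f) {x y : E} (γ : Path x y) :
    edist (f x) (f y) ≤ pathLength γ := by
  obtain ⟨δ, hδ, hγδ⟩ := hf.exists_dist_eq_of_dist_lt γ.toContinuousMap
  have := unitInterval.edist_le_of_forall_dist_lt (F := f ∘ γ)
    (Φ := fun a b => eVariationOn γ (Icc a b))
    (fun a b c hab hbc => by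
      simpa using (eVariationOn.Icc_add_Icc γ (s := univ) hab hbc (mem_univ b)).le)
    hδ (fun a b hab hδab => by
      have h := hγδ a b hδab
      simp only [Path.coe_toContinuousMap] at h
      rw [Function.comp_apply, Function.comp_apply, edist_dist, h, ← edist_dist]
      exact eVariationOn.edist_le γ (show a ∈ Icc a b from ⟨le_rfl, hab⟩) ⟨hab, le_rfl⟩)
    (zero_le_one' I)
  rwa [show Icc (0 : I) 1 = univ from Icc_bot_top, Function.comp_apply, Function.comp_apply,
    γ.source, γ.target] at this

theorem lipschitzWith_one (hf : IsLocalIsometry f) (hE : IsLengthSpace E) :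
    LipschitzWith 1 f :=
  LipschitzWith.of_edist_le fun x y => by
    rw [hE x y]
    exact le_iInf hf.edist_le_pathLength

theorem lipschitzWith_of_comp (hf : IsLocalIsometry f) {γ : C(I, E)} {L : ℝ≥0}
    (hγ : LipschitzWith L (f ∘ γ)) : LipschitzWith L γ := by
  obtain ⟨δ, hδ, hγδ⟩ := hf.exists_dist_eq_of_dist_lt γ
  have hle : ∀ a b : I, a ≤ b → edist (γ a) (γ b) ≤ L * edist a b :=
    fun a b hab => unitInterval.edist_le_of_forall_dist_lt (Φ := fun a b => L * edist a b)
      (fun a b c hab hbc => by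
        simp only [edist_dist, unitInterval.dist_eq_sub_of_le hab,
          unitInterval.dist_eq_sub_of_le hbc, unitInterval.dist_eq_sub_of_le (hab.trans hbc)]
        rw [← mul_add, ← ENNReal.ofReal_add (sub_nonneg.2 hab) (sub_nonneg.2 hbc)]
        ring_nf; rfl)
      hδ (fun a b _ hδab => by
        rw [edist_dist, ← hγδ a b hδab, ← edist_dist]; exact hγ a b) hab
  refine fun a b => (le_total a b).elim (hle a b) fun hba => ?_
  rw [edist_comm, edist_comm a]; exact hle b a hba

theorem exists_forall_dist_le_of_dist_comp_le (hf : IsLocalIsometry f) (Γ : C(I, E)) :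
    ∃ ε > 0, ∀ Γ' : C(I, E), Γ' 0 = Γ 0 → ∀ η < ε,
      (∀ t, dist (f (Γ t)) (f (Γ' t)) ≤ η) → ∀ t, dist (Γ t) (Γ' t) ≤ η := by
  obtain ⟨ε, hε, hfε⟩ := hf.exists_uniform_radius (isCompact_range Γ.continuous)
  refine ⟨ε, hε, fun Γ' h0 η hη hclose => ?_⟩
  -- below the radius `ε` distances upstairs equal distances downstairs, so the set where the
  -- two paths are `η`-close is clopen
  have hcont : Continuous fun t => dist (Γ t) (Γ' t) := Γ.continuous.dist Γ'.continuous
  have hsets : {t | dist (Γ t) (Γ' t) ≤ η} = {t | dist (Γ t) (Γ' t) < ε} := by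
    ext t
    refine ⟨fun ht => lt_of_le_of_lt ht hη, fun ht => ?_⟩
    rw [mem_ofPred_eq, ← hfε (Γ t) (mem_range_self t) _ _ (by rwa [dist_self])
      (by rwa [dist_comm])]
    exact hclose t
  have hclopen : IsClopen {t | dist (Γ t) (Γ' t) ≤ η} :=
    ⟨isClosed_le hcont continuous_const, hsets ▸ isOpen_lt hcont continuous_const⟩
  have h0 : (0 : I) ∈ {t | dist (Γ t) (Γ' t) ≤ η} := by simpa [h0] using hclose 0
  exact eq_univ_iff_forall.1 (hclopen.eq_univ ⟨0, h0⟩)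

theorem tendstoUniformly_of_comp (hf : IsLocalIsometry f) {ι : Type*} {l : Filter ι}
    {Γ : C(I, E)} {Γ' : ι → C(I, E)} (h0 : ∀ i, Γ' i 0 = Γ 0)
    (h : TendstoUniformly (fun i => f ∘ Γ' i) (f ∘ Γ) l) :
    TendstoUniformly (fun i => ⇑(Γ' i)) Γ l := by
  obtain ⟨ε, hε, hΓ⟩ := hf.exists_forall_dist_le_of_dist_comp_le Γ
  rw [Metric.tendstoUniformly_iff] at h ⊢
  intro η hη
  have hη' : 0 < min (η / 2) (ε / 2) := lt_min (half_pos hη) (half_pos hε)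
  filter_upwards [h _ hη'] with i hi
  exact fun t => (hΓ (Γ' i) (h0 i) _ (by linarith [min_le_right (η / 2) (ε / 2)])
    (fun t => (hi t).le) t).trans_lt (by linarith [min_le_left (η / 2) (ε / 2)])

theorem exists_path_lipschitzWith_of_tendstoUniformly (hf : IsLocalIsometry f)
    (hcov : IsCoveringMap f) {x y : E} {γ : ℕ → Path x y} {c : C(I, F)} {d : ℝ≥0}
    (hc : LipschitzWith d c) (hlim : TendstoUniformly (fun k => f ∘ γ k) c atTop) :
    ∃ Γ : Path x y, LipschitzWith d Γ := by
  have hc0 : c 0 = f x := tendsto_nhds_unique (hlim.tendsto_at 0) (by simp)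
  set Γ := hcov.liftPath c x hc0
  have hfΓ : f ∘ Γ = c := hcov.liftPath_lifts c x hc0
  have hΓ0 : Γ 0 = x := hcov.liftPath_zero c x hc0
  have hγΓ := hf.tendstoUniformly_of_comp (Γ' := fun k => (γ k : C(I, E))) (by simp [hΓ0])
    (hfΓ ▸ hlim)
  have hΓ1 : Γ 1 = y := tendsto_nhds_unique (hγΓ.tendsto_at 1) (by simp)
  exact ⟨⟨Γ, hΓ0, hΓ1⟩, hf.lipschitzWith_of_comp (hfΓ ▸ hc)⟩

end IsLocalIsometry

end LocalIsometry

theorem stmt3_general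
    -- `N` is a complete Riemannian manifold: a smooth manifold modeled on `ℝⁿ` whose
    -- (Riemannian) distance makes it a complete length metric space
    {n : ℕ} {N : Type} [MetricSpace N] [CompleteSpace N]
    [ChartedSpace (EuclideanSpace ℝ (Fin n)) N]
    (hlen : IsLengthSpace N)
    (p : N) (R : ℝ) (hR : 0 < R)
    -- `E` is the universal cover of the open ball `B_p(R)`, equipped with the lifted
    -- (covering) metric
    (E : Type) [MetricSpace E]
    (q : E → ball p R) (hq : IsCoveringMap q) (hlenE : IsLengthSpace E)
    (hloc : ∀ e : E, ∃ ε > 0, ∀ x y : E, dist x e < ε → dist y e < ε →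
      dist (q x) (q y) = dist x y)
    (pt : E) (hpt : q pt = ctr p hR)
    -- `ep g = g • p̃` is the deck-transformation action of `g ∈ π₁(B_p(R), p)` on `p̃`
    (ep : FundamentalGroup (ball p R) (ctr p hR) → E)
    (hep : ∀ g (γ : Path (ctr p hR) (ctr p hR)), pathClass γ = g →
      ∀ Γ : C(I, E), (∀ t, q (Γ t) = γ t) → Γ 0 = pt → Γ 1 = ep g)
    (g : FundamentalGroup (ball p R) (ctr p hR)) (hg : dist pt (ep g) < 2 * R) :
    -- there is a minimizing geodesic in `E` from `p̃` to `g p̃`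
    ∃ γ : Path pt (ep g), ∀ s t : I,
      dist (γ s) (γ t) = |(s : ℝ) - (t : ℝ)| * dist pt (ep g) := by
  have hq1 : LipschitzWith 1 q := IsLocalIsometry.lipschitzWith_one hloc hlenE
  obtain ⟨γ₀, hγ₀⟩ := Quotient.exists_rep (FundamentalGroup.toPath g)
  have hqg : q (ep g) = ctr p hR := hq.apply_eq_of_lift hpt (hep g γ₀ hγ₀)
  have := ChartedSpace.locallyCompactSpace (EuclideanSpace ℝ (Fin n)) N
  have := hlen.properSpace
  obtain ⟨γ, hγ⟩ := hlenE.exists_seq_path_lipschitzWith pt (ep g)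
  obtain ⟨c, hc, hcp, φ, hlim⟩ := exists_loop_lipschitzWith_tendstoUniformly
    (y := p) (γ := fun m t => (q (γ m t) : N)) (by simp [hpt, ctr]) (by simp [hqg, ctr])
    fun m => by
      have := (LipschitzWith.subtype_val (ball p R)).comp (hq1.comp (hγ m))
      rwa [one_mul, one_mul] at this
  have hcR : ∀ t, c t ∈ ball p R := fun t =>
    mem_ball.2 ((hcp t).trans_lt (by rw [coe_nndist]; linarith))
  obtain ⟨Γ, hΓ⟩ := IsLocalIsometry.exists_path_lipschitzWith_of_tendstoUniformly hloc hq
    (γ := fun k => γ (φ k)) (c := ⟨fun t => ⟨c t, hcR t⟩, c.continuous.subtype_mk hcR⟩)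
    (fun s t => hc s t)
    (Metric.tendstoUniformly_iff.2 fun ε hε => Metric.tendstoUniformly_iff.1 hlim ε hε)
  exact ⟨Γ, Γ.dist_eq_of_lipschitzWith hΓ⟩

theorem stmt3
    -- `N` is a complete Riemannian manifold: a smooth manifold modeled on `ℝⁿ` whose
    -- (Riemannian) distance makes it a complete length metric space
    {n : ℕ} {N : Type} [MetricSpace N] [CompleteSpace N]
    [ChartedSpace (EuclideanSpace ℝ (Fin n)) N] [IsManifold (𝓡 n) (⊤ : ℕ∞) N]
    (hlen : IsLengthSpace N)
    (p : N) (R : ℝ) (hR : 0 < R)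
    -- `E` is the universal cover of the open ball `B_p(R)`, equipped with the lifted
    -- (covering) metric
    (E : Type) [MetricSpace E] [PathConnectedSpace E] [SimplyConnectedSpace E]
    (q : E → ball p R) (hq : IsCoveringMap q) (hlenE : IsLengthSpace E)
    (hloc : ∀ e : E, ∃ ε > 0, ∀ x y : E, dist x e < ε → dist y e < ε →
      dist (q x) (q y) = dist x y)
    (pt : E) (hpt : q pt = ctr p hR)
    -- `ep g = g • p̃` is the deck-transformation action of `g ∈ π₁(B_p(R), p)` on `p̃`
    (ep : FundamentalGroup (ball p R) (ctr p hR) → E)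
    (hep : ∀ g (γ : Path (ctr p hR) (ctr p hR)), pathClass γ = g →
      ∀ Γ : C(I, E), (∀ t, q (Γ t) = γ t) → Γ 0 = pt → Γ 1 = ep g)
    (g : FundamentalGroup (ball p R) (ctr p hR)) (hg : dist pt (ep g) < 2 * R) :
    -- there is a minimizing geodesic in `E` from `p̃` to `g p̃`
    ∃ γ : Path pt (ep g), ∀ s t : I,
      dist (γ s) (γ t) = |(s : ℝ) - (t : ℝ)| * dist pt (ep g) :=
  stmt3_general (n := n) hlen p R hR E q hq hlenE hloc pt hpt ep hep g hg
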